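/- arXiv:2204.04075 — 6 statements merged into one kernel-verified Lean document; each statement's English description precedes it below -/
import Mathlib

section
/- Let A be a graded vector space with two anticommuting differentials d₀, d₁. The strong d₀d₁-lemma, ker(d₀) ∩ ker(d₁) ∩ (im(d₀) + im(d₁)) = im(d₀d₁), holds if and only if both ker(d₁) ∩ im(d₀) = im(d₀d₁) and ker(d₀) ∩ im(d₁) = im(d₀d₁) hold. -/
/-- Lemma 1.4 (lemma.DGMSd0d1): for a (graded) vector space with two
anticommuting differentials `d₀, d₁`, the strong `d₀d₁`-lemma
`ker d₀ ⊓ ker d₁ ⊓ (im d₀ + im d₁) = im (d₀ d₁)` holds if and only if both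
`ker d₁ ⊓ im d₀ = im (d₀ d₁)` and `ker d₀ ⊓ im d₁ = im (d₀ d₁)` hold. -/
theorem statement2 (K : Type) [Field K] [CharZero K]
    (A : Type) [AddCommGroup A] [Module K A]
    (d₀ d₁ : A →ₗ[K] A)
    (h00 : d₀ ∘ₗ d₀ = 0) (h11 : d₁ ∘ₗ d₁ = 0)
    (h01 : d₀ ∘ₗ d₁ + d₁ ∘ₗ d₀ = 0) :
    (LinearMap.ker d₀ ⊓ LinearMap.ker d₁ ⊓ (LinearMap.range d₀ ⊔ LinearMap.range d₁)
        = LinearMap.range (d₀ ∘ₗ d₁)) ↔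
      (LinearMap.ker d₁ ⊓ LinearMap.range d₀ = LinearMap.range (d₀ ∘ₗ d₁) ∧
       LinearMap.ker d₀ ⊓ LinearMap.range d₁ = LinearMap.range (d₀ ∘ₗ d₁)) := by
  have hd0 : ∀ x, d₀ (d₀ x) = 0 := fun x => LinearMap.congr_fun h00 x
  have hd1 : ∀ x, d₁ (d₁ x) = 0 := fun x => LinearMap.congr_fun h11 x
  have hanti : ∀ x, d₀ (d₁ x) = - d₁ (d₀ x) := by
    intro x
    have := LinearMap.congr_fun h01 x
    simp only [LinearMap.add_apply, LinearMap.comp_apply, LinearMap.zero_apply] at this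
    exact eq_neg_of_add_eq_zero_left this
  -- d₁ kills elements of the image of d₀ ∘ d₁
  have hIk1 : ∀ x, d₁ (d₀ (d₁ x)) = 0 := by
    intro x
    rw [hanti x]
    simp [hd1]
  -- inclusions of I := range (d₀ ∘ₗ d₁) into the relevant spaces
  have hI1 : LinearMap.range (d₀ ∘ₗ d₁) ≤ LinearMap.ker d₁ ⊓ LinearMap.range d₀ := by
    rintro a ⟨x, rfl⟩
    exact ⟨by simpa [LinearMap.mem_ker] using hIk1 x, ⟨d₁ x, rfl⟩⟩
  have hI2 : LinearMap.range (d₀ ∘ₗ d₁) ≤ LinearMap.ker d₀ ⊓ LinearMap.range d₁ := by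
    rintro a ⟨x, rfl⟩
    refine ⟨by simpa [LinearMap.mem_ker] using hd0 (d₁ x), ⟨-(d₀ x), ?_⟩⟩
    simp [hanti x]
  have hIL : LinearMap.range (d₀ ∘ₗ d₁) ≤
      LinearMap.ker d₀ ⊓ LinearMap.ker d₁ ⊓ (LinearMap.range d₀ ⊔ LinearMap.range d₁) := by
    rintro a ⟨x, rfl⟩
    refine ⟨⟨by simpa [LinearMap.mem_ker] using hd0 (d₁ x),
      by simpa [LinearMap.mem_ker] using hIk1 x⟩, ?_⟩
    exact Submodule.mem_sup_left ⟨d₁ x, rfl⟩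
  constructor
  · intro hL
    constructor
    · refine le_antisymm ?_ hI1
      rintro a ⟨hk1, x, rfl⟩
      rw [← hL]
      exact ⟨⟨by simpa [LinearMap.mem_ker] using hd0 x, hk1⟩,
        Submodule.mem_sup_left ⟨x, rfl⟩⟩
    · refine le_antisymm ?_ hI2
      rintro a ⟨hk0, y, rfl⟩
      rw [← hL]
      exact ⟨⟨hk0, by simpa [LinearMap.mem_ker] using hd1 y⟩,
        Submodule.mem_sup_right ⟨y, rfl⟩⟩
  · rintro ⟨h1, h2⟩
    refine le_antisymm ?_ hIL
    rintro a ⟨⟨hk0, hk1⟩, hsum⟩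
    obtain ⟨b, ⟨x, rfl⟩, c, ⟨y, rfl⟩, rfl⟩ := Submodule.mem_sup.mp hsum
    have hk0' : d₀ (d₀ x + d₁ y) = 0 := hk0
    have hk1' : d₁ (d₀ x + d₁ y) = 0 := hk1
    have hx : d₁ (d₀ x) = 0 := by
      have := hk1'
      rw [map_add, hd1 y, add_zero] at this
      exact this
    have hy : d₀ (d₁ y) = 0 := by
      have := hk0'
      rw [map_add, hd0 x, zero_add] at this
      exact this
    have hmx : d₀ x ∈ LinearMap.range (d₀ ∘ₗ d₁) := by
      rw [← h1]; exact ⟨hx, ⟨x, rfl⟩⟩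
    have hmy : d₁ y ∈ LinearMap.range (d₀ ∘ₗ d₁) := by
      rw [← h2]; exact ⟨hy, ⟨y, rfl⟩⟩
    exact Submodule.add_mem _ hmx hmy
end

section
/- In a DGMS vector space (A, d₀, d₁), the inclusion of the subcomplex (ker(d₁), d₀) into (A, d₀) is a quasi-isomorphism: it induces an isomorphism on d₀-cohomology. -/
/-- (ι-step of Theorem 1.9): in a DGMS vector space `(A, d₀, d₁)` the inclusion
of the subcomplex `(ker d₁, d₀)` in `(A, d₀)` is a quasi-isomorphism: it is
surjective on `d₀`-cohomology (every `d₀`-cycle of `A` agrees, modulo `im d₀`,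
with a `d₀`-cycle lying in `ker d₁`) and injective on `d₀`-cohomology (a
`d₀`-cycle of `ker d₁` which is `d₀`-exact in `A` is `d₀`-exact in `ker d₁`). -/
theorem statement3 (K : Type) [Field K] [CharZero K]
    (A : Type) [AddCommGroup A] [Module K A]
    (d₀ d₁ : A →ₗ[K] A)
    (h00 : d₀ ∘ₗ d₀ = 0) (h11 : d₁ ∘ₗ d₁ = 0)
    (h01 : d₀ ∘ₗ d₁ + d₁ ∘ₗ d₀ = 0)
    (hstrong : LinearMap.ker d₀ ⊓ LinearMap.ker d₁ ⊓
        (LinearMap.range d₀ ⊔ LinearMap.range d₁) = LinearMap.range (d₀ ∘ₗ d₁)) :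
    -- surjectivity on `d₀`-cohomology
    (∀ x : A, d₀ x = 0 →
        ∃ y : A, d₁ y = 0 ∧ d₀ y = 0 ∧ x - y ∈ LinearMap.range d₀) ∧
    -- injectivity on `d₀`-cohomology
    (∀ y : A, d₁ y = 0 → d₀ y = 0 → y ∈ LinearMap.range d₀ →
        ∃ z : A, d₁ z = 0 ∧ d₀ z = y) := by
  have hanti : ∀ a : A, d₁ (d₀ a) = -(d₀ (d₁ a)) := by
    intro a
    have := congrArg (fun f => f a) h01
    simp only [LinearMap.add_apply, LinearMap.comp_apply, LinearMap.zero_apply] at this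
    exact eq_neg_of_add_eq_zero_right this
  constructor
  · intro x hx
    -- d₁ x lies in the strong intersection
    have hmem : d₁ x ∈ LinearMap.ker d₀ ⊓ LinearMap.ker d₁ ⊓
        (LinearMap.range d₀ ⊔ LinearMap.range d₁) := by
      refine ⟨⟨?_, ?_⟩, ?_⟩
      · have := congrArg (fun f => f x) h01
        simp only [LinearMap.add_apply, LinearMap.comp_apply, LinearMap.zero_apply] at this
        have h2 : d₁ (d₀ x) = 0 := by rw [hx]; simp
        rw [h2, add_zero] at this
        exact this
      · have := congrArg (fun f => f x) h11
        simpa [LinearMap.comp_apply] using this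
      · exact Submodule.mem_sup_right ⟨x, rfl⟩
    rw [hstrong] at hmem
    obtain ⟨w, hw⟩ := hmem
    simp only [LinearMap.comp_apply] at hw
    refine ⟨x + d₀ w, ?_, ?_, ?_⟩
    · rw [map_add, hanti w, hw]
      simp
    · rw [map_add, hx]
      have := congrArg (fun f => f w) h00
      simpa [LinearMap.comp_apply] using this
    · exact ⟨-w, by simp⟩
  · intro y hy1 hy0 hyr
    have hmem : y ∈ LinearMap.ker d₀ ⊓ LinearMap.ker d₁ ⊓
        (LinearMap.range d₀ ⊔ LinearMap.range d₁) :=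
      ⟨⟨hy0, hy1⟩, Submodule.mem_sup_left hyr⟩
    rw [hstrong] at hmem
    obtain ⟨v, hv⟩ := hmem
    simp only [LinearMap.comp_apply] at hv
    refine ⟨d₁ v, ?_, hv⟩
    have := congrArg (fun f => f v) h11
    simpa [LinearMap.comp_apply] using this
end

section
/- In a DGMS vector space (A, d₀, d₁), the natural projection from the subcomplex (ker(d₁), d₀) to (H_{d₁}(A), induced d₀) induces an isomorphism on d₀-cohomology; since the induced d₀ on H_{d₁}(A) is zero, the d₀-cohomology of A is isomorphic to H_{d₁}(A). -/
open Submodule LinearMap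

lemma statement4_helper {K A : Type} [Field K] [AddCommGroup A] [Module K A]
    (d : A →ₗ[K] A) (p : Submodule K A) (N : Submodule K p)
    (hsub : p ≤ LinearMap.ker d)
    (hsurj : ∀ x : A, d x = 0 → ∃ y ∈ p, x - y ∈ LinearMap.range d)
    (hker : ∀ x : p, ((x : A) ∈ LinearMap.range d ↔ x ∈ N)) :
    Nonempty ((↥(LinearMap.ker d) ⧸
        Submodule.comap (LinearMap.ker d).subtype (LinearMap.range d)) ≃ₗ[K] (p ⧸ N)) := by
  set Q := Submodule.comap (LinearMap.ker d).subtype (LinearMap.range d) with hQ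
  let f : p →ₗ[K] ↥(LinearMap.ker d) ⧸ Q := Q.mkQ ∘ₗ Submodule.inclusion hsub
  have hf : Function.Surjective f := by
    intro x
    obtain ⟨x, rfl⟩ := Q.mkQ_surjective x
    obtain ⟨y, hy, hxy⟩ := hsurj (x : A) x.2
    refine ⟨⟨y, hy⟩, ?_⟩
    show Q.mkQ (Submodule.inclusion hsub ⟨y, hy⟩) = Q.mkQ x
    simp only [Submodule.mkQ_apply]
    rw [Submodule.Quotient.eq]
    have h2 := neg_mem hxy
    show Submodule.inclusion hsub ⟨y, hy⟩ - x ∈ Q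
    rw [hQ, Submodule.mem_comap, map_sub]
    simpa using h2
  have hkerf : LinearMap.ker f = N := by
    ext y
    have : f y = 0 ↔ ((y : A) ∈ LinearMap.range d) := by
      show Q.mkQ (Submodule.inclusion hsub y) = 0 ↔ _
      simp only [Submodule.mkQ_apply]
      rw [Submodule.Quotient.mk_eq_zero]
      rfl
    rw [LinearMap.mem_ker, this, hker]
  exact ⟨(f.quotKerEquivOfSurjective hf).symm.trans (Submodule.quotEquivOfEq _ _ hkerf)⟩

/-- (ρ-step of Theorem 1.9): in a DGMS vector space `(A, d₀, d₁)` the induced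
differential `d₀` on `H_{d₁}(A)` is zero, the projection
`(ker d₁, d₀) → (H_{d₁}(A), 0)` is a quasi-isomorphism (stated elementwise),
and consequently the `d₀`-cohomology of `A` is isomorphic to `H_{d₁}(A)`. -/
theorem statement4 (K : Type) [Field K] [CharZero K]
    (A : Type) [AddCommGroup A] [Module K A]
    (d₀ d₁ : A →ₗ[K] A)
    (h00 : d₀ ∘ₗ d₀ = 0) (h11 : d₁ ∘ₗ d₁ = 0)
    (h01 : d₀ ∘ₗ d₁ + d₁ ∘ₗ d₀ = 0)
    (hstrong : LinearMap.ker d₀ ⊓ LinearMap.ker d₁ ⊓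
        (LinearMap.range d₀ ⊔ LinearMap.range d₁) = LinearMap.range (d₀ ∘ₗ d₁)) :
    -- the differential induced by `d₀` on `H_{d₁}(A)` is zero
    (∀ x : A, d₁ x = 0 → d₀ x ∈ LinearMap.range d₁) ∧
    -- surjectivity of `ρ` on cohomology: every `d₁`-cohomology class is
    -- represented by an element of `ker d₀ ⊓ ker d₁`
    (∀ x : A, d₁ x = 0 →
        ∃ y : A, d₁ y = 0 ∧ d₀ y = 0 ∧ x - y ∈ LinearMap.range d₁) ∧
    -- injectivity of `ρ` on cohomology
    (∀ x : A, d₁ x = 0 → d₀ x = 0 → x ∈ LinearMap.range d₁ →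
        ∃ z : A, d₁ z = 0 ∧ d₀ z = x) ∧
    -- the `d₀`-cohomology of `A` is isomorphic to `H_{d₁}(A)`
    Nonempty
      ((↥(LinearMap.ker d₀) ⧸
          Submodule.comap (LinearMap.ker d₀).subtype (LinearMap.range d₀)) ≃ₗ[K]
       (↥(LinearMap.ker d₁) ⧸
          Submodule.comap (LinearMap.ker d₁).subtype (LinearMap.range d₁))) := by
  have h00' : ∀ x, d₀ (d₀ x) = 0 := fun x => by
    have := LinearMap.congr_fun h00 x; simpa using this
  have h11' : ∀ x, d₁ (d₁ x) = 0 := fun x => by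
    have := LinearMap.congr_fun h11 x; simpa using this
  have h01' : ∀ x, d₀ (d₁ x) = - d₁ (d₀ x) := by
    intro x
    have := LinearMap.congr_fun h01 x
    simp only [LinearMap.add_apply, LinearMap.comp_apply, LinearMap.zero_apply] at this
    exact eq_neg_of_add_eq_zero_left this
  -- main extraction from the strong lemma
  have key : ∀ x : A, d₀ x = 0 → d₁ x = 0 →
      (x ∈ LinearMap.range d₀ ∨ x ∈ LinearMap.range d₁) →
      ∃ w, d₀ (d₁ w) = x := by
    intro x hx0 hx1 hx
    have hmem : x ∈ LinearMap.ker d₀ ⊓ LinearMap.ker d₁ ⊓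
        (LinearMap.range d₀ ⊔ LinearMap.range d₁) := by
      refine ⟨⟨hx0, hx1⟩, ?_⟩
      rcases hx with h | h
      · exact Submodule.mem_sup_left h
      · exact Submodule.mem_sup_right h
    rw [hstrong] at hmem
    obtain ⟨w, hw⟩ := hmem
    exact ⟨w, hw⟩
  -- claim 1
  have c1 : ∀ x : A, d₁ x = 0 → d₀ x ∈ LinearMap.range d₁ := by
    intro x hx
    obtain ⟨w, hw⟩ := key (d₀ x) (h00' x)
      (by rw [show d₁ (d₀ x) = - d₀ (d₁ x) by rw [h01' x, neg_neg], hx]; simp)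
      (Or.inl ⟨x, rfl⟩)
    refine ⟨- d₀ w, ?_⟩
    rw [map_neg, ← h01' w, hw]
  -- claim 2
  have c2 : ∀ x : A, d₁ x = 0 →
      ∃ y : A, d₁ y = 0 ∧ d₀ y = 0 ∧ x - y ∈ LinearMap.range d₁ := by
    intro x hx
    obtain ⟨w, hw⟩ := key (d₀ x) (h00' x)
      (by rw [show d₁ (d₀ x) = - d₀ (d₁ x) by rw [h01' x, neg_neg], hx]; simp)
      (Or.inl ⟨x, rfl⟩)
    refine ⟨x - d₁ w, ?_, ?_, ?_⟩
    · rw [map_sub, hx, h11' w, sub_zero]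
    · rw [map_sub, hw, sub_self]
    · exact ⟨w, by simp⟩
  -- claim 2 for d₀ (symmetric)
  have c2' : ∀ x : A, d₀ x = 0 →
      ∃ y : A, d₀ y = 0 ∧ d₁ y = 0 ∧ x - y ∈ LinearMap.range d₀ := by
    intro x hx
    have hd1x0 : d₀ (d₁ x) = 0 := by rw [h01' x, hx, map_zero, neg_zero]
    obtain ⟨w, hw⟩ := key (d₁ x) hd1x0 (h11' x) (Or.inr ⟨x, rfl⟩)
    refine ⟨x + d₀ w, ?_, ?_, ?_⟩
    · rw [map_add, hx, h00' w, add_zero]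
    · rw [map_add]
      have : d₁ (d₀ w) = - d₀ (d₁ w) := by rw [h01' w, neg_neg]
      rw [this, hw]
      abel
    · exact ⟨-w, by simp⟩
  -- claim 3
  have c3 : ∀ x : A, d₁ x = 0 → d₀ x = 0 → x ∈ LinearMap.range d₁ →
      ∃ z : A, d₁ z = 0 ∧ d₀ z = x := by
    intro x hx1 hx0 hxr
    obtain ⟨w, hw⟩ := key x hx0 hx1 (Or.inr hxr)
    exact ⟨d₁ w, h11' w, hw⟩
  refine ⟨c1, c2, c3, ?_⟩
  -- claim 4 via the helper applied twice to p = ker d₀ ⊓ ker d₁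
  set p : Submodule K A := LinearMap.ker d₀ ⊓ LinearMap.ker d₁ with hp
  set N : Submodule K p := Submodule.comap p.subtype (LinearMap.range (d₀ ∘ₗ d₁)) with hN
  have e1 := statement4_helper d₁ p N inf_le_right
    (fun x hx => by
      obtain ⟨y, hy1, hy0, hxy⟩ := c2 x hx
      exact ⟨y, ⟨hy0, hy1⟩, hxy⟩)
    (fun x => by
      constructor
      · intro hx
        obtain ⟨w, hw⟩ := key (x : A) x.2.1 x.2.2 (Or.inr hx)
        exact ⟨w, by simpa using hw⟩
      · intro hx
        obtain ⟨w, hw⟩ := hx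
        refine ⟨- d₀ w, ?_⟩
        simp only [LinearMap.comp_apply, Submodule.subtype_apply] at hw
        rw [map_neg, show d₁ (d₀ w) = - d₀ (d₁ w) by rw [h01' w, neg_neg], neg_neg, hw])
  have e0 := statement4_helper d₀ p N inf_le_left
    (fun x hx => by
      obtain ⟨y, hy0, hy1, hxy⟩ := c2' x hx
      exact ⟨y, ⟨hy0, hy1⟩, hxy⟩)
    (fun x => by
      constructor
      · intro hx
        obtain ⟨w, hw⟩ := key (x : A) x.2.1 x.2.2 (Or.inl hx)
        exact ⟨w, by simpa using hw⟩
      · intro hx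
        obtain ⟨w, hw⟩ := hx
        simp only [LinearMap.comp_apply] at hw
        exact ⟨d₁ w, by simpa using hw⟩)
  obtain ⟨e0⟩ := e0
  obtain ⟨e1⟩ := e1
  exact ⟨e0.trans e1.symm⟩
end

section
/- If (A, ·, d₀, d₁) is an associative DGMS algebra, then (A, ·, d₀ + d₁, d₁) is also an associative DGMS algebra; in particular (d₀+d₁)² = 0, (d₀+d₁)d₁ + d₁(d₀+d₁) = 0, d₀+d₁ is a derivation, and the strong (d₀+d₁)d₁-lemma holds: ker(d₀+d₁) ∩ ker(d₁) ∩ (im(d₀+d₁) + im(d₁)) = im((d₀+d₁)d₁). -/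
/-- Proposition 1.11 (prop.DGMStrick): if `(A, ·, d₀, d₁)` is an associative
DGMS algebra, then `(A, ·, d₀ + d₁, d₁)` is again an associative DGMS algebra:
`(d₀+d₁)² = 0`, `(d₀+d₁)` anticommutes with `d₁`, `d₀+d₁` is a degree-1
derivation, and the strong `(d₀+d₁)d₁`-lemma holds. -/
theorem statement6 (K : Type) [Field K] [CharZero K]
    (A : Type) [NonUnitalRing A] [Module K A]
    [SMulCommClass K A A] [IsScalarTower K A A]
    (𝒜 : ℤ → Submodule K A) (hinternal : DirectSum.IsInternal 𝒜)
    (hgrmul : ∀ i j : ℤ, ∀ a ∈ 𝒜 i, ∀ b ∈ 𝒜 j, a * b ∈ 𝒜 (i + j))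
    (d₀ d₁ : A →ₗ[K] A)
    (hgr₀ : ∀ i : ℤ, ∀ a ∈ 𝒜 i, d₀ a ∈ 𝒜 (i + 1))
    (hgr₁ : ∀ i : ℤ, ∀ a ∈ 𝒜 i, d₁ a ∈ 𝒜 (i + 1))
    (hleib₀ : ∀ i : ℤ, ∀ a ∈ 𝒜 i, ∀ b : A,
        d₀ (a * b) = d₀ a * b + (Int.negOnePow i : ℤ) • (a * d₀ b))
    (hleib₁ : ∀ i : ℤ, ∀ a ∈ 𝒜 i, ∀ b : A,
        d₁ (a * b) = d₁ a * b + (Int.negOnePow i : ℤ) • (a * d₁ b))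
    (h00 : d₀ ∘ₗ d₀ = 0) (h11 : d₁ ∘ₗ d₁ = 0)
    (h01 : d₀ ∘ₗ d₁ + d₁ ∘ₗ d₀ = 0)
    (hstrong : LinearMap.ker d₀ ⊓ LinearMap.ker d₁ ⊓
        (LinearMap.range d₀ ⊔ LinearMap.range d₁) = LinearMap.range (d₀ ∘ₗ d₁)) :
    -- `(d₀ + d₁)² = 0`
    ((d₀ + d₁) ∘ₗ (d₀ + d₁) = 0) ∧
    -- `(d₀ + d₁)` and `d₁` anticommute
    ((d₀ + d₁) ∘ₗ d₁ + d₁ ∘ₗ (d₀ + d₁) = 0) ∧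
    -- `d₀ + d₁` has degree 1 and is a derivation
    (∀ i : ℤ, ∀ a ∈ 𝒜 i, (d₀ + d₁) a ∈ 𝒜 (i + 1)) ∧
    (∀ i : ℤ, ∀ a ∈ 𝒜 i, ∀ b : A,
        (d₀ + d₁) (a * b) = (d₀ + d₁) a * b + (Int.negOnePow i : ℤ) • (a * (d₀ + d₁) b)) ∧
    -- the strong `(d₀+d₁)d₁`-lemma
    (LinearMap.ker (d₀ + d₁) ⊓ LinearMap.ker d₁ ⊓
        (LinearMap.range (d₀ + d₁) ⊔ LinearMap.range d₁)
      = LinearMap.range ((d₀ + d₁) ∘ₗ d₁)) := by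

  have hsq : (d₀ + d₁) ∘ₗ (d₀ + d₁) = 0 := by
    simp only [LinearMap.add_comp, LinearMap.comp_add, h00, h11, zero_add, add_zero]
    rw [← h01]; abel
  have hanti : (d₀ + d₁) ∘ₗ d₁ + d₁ ∘ₗ (d₀ + d₁) = 0 := by
    simp only [LinearMap.add_comp, LinearMap.comp_add, h11, zero_add, add_zero]
    exact h01
  refine ⟨hsq, hanti, ?_, ?_, ?_⟩
  · intro i a ha
    exact Submodule.add_mem _ (hgr₀ i a ha) (hgr₁ i a ha)
  · intro i a ha b
    simp only [LinearMap.add_apply, hleib₀ i a ha b, hleib₁ i a ha b, mul_add, smul_add, add_mul]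
    abel
  · have hker : LinearMap.ker (d₀ + d₁) ⊓ LinearMap.ker d₁ = LinearMap.ker d₀ ⊓ LinearMap.ker d₁ := by
      ext x
      simp only [Submodule.mem_inf, LinearMap.mem_ker, LinearMap.add_apply]
      constructor
      · rintro ⟨h1, h2⟩; rw [h2, add_zero] at h1; exact ⟨h1, h2⟩
      · rintro ⟨h1, h2⟩; exact ⟨by rw [h1, h2, add_zero], h2⟩
    have hrange : LinearMap.range (d₀ + d₁) ⊔ LinearMap.range d₁
        = LinearMap.range d₀ ⊔ LinearMap.range d₁ := by
      apply le_antisymm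
      · apply sup_le _ le_sup_right
        rintro _ ⟨x, rfl⟩
        exact Submodule.add_mem _
          (Submodule.mem_sup_left ⟨x, rfl⟩) (Submodule.mem_sup_right ⟨x, rfl⟩)
      · apply sup_le _ le_sup_right
        rintro _ ⟨x, rfl⟩
        have : d₀ x = (d₀ + d₁) x - d₁ x := by simp
        rw [this]
        exact Submodule.sub_mem _
          (Submodule.mem_sup_left ⟨x, rfl⟩) (Submodule.mem_sup_right ⟨x, rfl⟩)
    have hcomp : (d₀ + d₁) ∘ₗ d₁ = d₀ ∘ₗ d₁ := by
      simp only [LinearMap.add_comp, h11, add_zero]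
    rw [hker, hrange, hcomp, hstrong]
end

section
/- In an associative DGMS algebra with differentials d₀, d₁ and δ = d₀ + d₁: every element in ker(δ) ∩ im(d₁) lies in im(δ∘d₁), and every element in ker(d₁) ∩ im(δ) lies in im(δ∘d₁). -/
/-- (Part of Proposition 1.11, proof of prop.DGMStrick): in an associative DGMS
algebra with differentials `d₀, d₁` and `δ = d₀ + d₁`, every element of
`ker δ ⊓ im d₁` lies in `im (δ ∘ d₁)`, and every element of `ker d₁ ⊓ im δ`
lies in `im (δ ∘ d₁)`. -/
theorem statement7 (K : Type) [Field K] [CharZero K]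
    (A : Type) [AddCommGroup A] [Module K A]
    (d₀ d₁ : A →ₗ[K] A)
    (h00 : d₀ ∘ₗ d₀ = 0) (h11 : d₁ ∘ₗ d₁ = 0)
    (h01 : d₀ ∘ₗ d₁ + d₁ ∘ₗ d₀ = 0)
    (hstrong : LinearMap.ker d₀ ⊓ LinearMap.ker d₁ ⊓
        (LinearMap.range d₀ ⊔ LinearMap.range d₁) = LinearMap.range (d₀ ∘ₗ d₁)) :
    (∀ x : A, (d₀ + d₁) x = 0 → x ∈ LinearMap.range d₁ →
        x ∈ LinearMap.range ((d₀ + d₁) ∘ₗ d₁)) ∧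
    (∀ x : A, d₁ x = 0 → x ∈ LinearMap.range (d₀ + d₁) →
        x ∈ LinearMap.range ((d₀ + d₁) ∘ₗ d₁)) := by
  -- pointwise facts
  have h11' : ∀ y : A, d₁ (d₁ y) = 0 := fun y =>
    congrFun (congrArg (fun f => f.toFun) h11) y
  have h01' : ∀ y : A, d₀ (d₁ y) + d₁ (d₀ y) = 0 := fun y =>
    congrFun (congrArg (fun f => f.toFun) h01) y
  -- (δ ∘ d₁) = (d₀ ∘ d₁)
  have hkey : (d₀ + d₁) ∘ₗ d₁ = d₀ ∘ₗ d₁ := by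
    ext y
    simp [h11' y]
  have hrange : LinearMap.range ((d₀ + d₁) ∘ₗ d₁) = LinearMap.range (d₀ ∘ₗ d₁) := by
    rw [hkey]
  constructor
  · intro x hδ ⟨y, hy⟩
    rw [hrange, ← hstrong]
    have hd1x : d₁ x = 0 := by rw [← hy]; exact h11' y
    have hd0x : d₀ x = 0 := by
      have := hδ
      simp only [LinearMap.add_apply] at this
      simpa [hd1x] using this
    refine ⟨⟨hd0x, hd1x⟩, ?_⟩
    exact Submodule.mem_sup_right ⟨y, hy⟩
  · intro x hd1x ⟨y, hy⟩
    rw [hrange, ← hstrong]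
    simp only [LinearMap.add_apply] at hy
    have hd1d0y : d₁ (d₀ y) = 0 := by
      have : d₁ (d₀ y) + d₁ (d₁ y) = 0 := by
        rw [← map_add, hy, hd1x]
      simpa [h11' y] using this
    have hd0d1y : d₀ (d₁ y) = 0 := by
      have := h01' y
      simpa [hd1d0y] using this
    have hd0x : d₀ x = 0 := by
      rw [← hy, map_add]
      have h00' : d₀ (d₀ y) = 0 := congrFun (congrArg (fun f => f.toFun) h00) y
      rw [h00', hd0d1y, add_zero]
    refine ⟨⟨hd0x, hd1x⟩, ?_⟩
    rw [← hy]
    exact Submodule.add_mem_sup ⟨y, rfl⟩ ⟨y, rfl⟩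
end

section
/- Let E be a complex vector bundle on a hyper-Kähler manifold with a projectively hyper-holomorphic connection ∇. The quaternionic Dolbeault complex qA^k(End(E)) = Sym^k(V) ⊗ A^{0,k}(End(E)) with differential x[∇_J^{0,1},−] + y[∇^{0,1},−] has cohomology H^k(qA*(End(E))) ≅ H^k_{[∇^{0,1},−]}(A^{0,*}(End(E))) ⊗ C[x,y]_k, where C[x,y]_k denotes homogeneous polynomials of degree k. -/
/-- Functions `ℤ → A k` supported on `[0, k]`: the degree-`k` piece of the
first-quadrant double complex `x^p y^q A^{0,p+q}` (the component at `p` stands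
for `x^p y^{k-p} A^{0,k}`). -/
def quatPiece {K : Type} [Field K] {A : ℤ → Type}
    [∀ i, AddCommGroup (A i)] [∀ i, Module K (A i)] (k : ℤ) :
    Submodule K (ℤ → A k) where
  carrier := {f | ∀ p : ℤ, p < 0 ∨ k < p → f p = 0}
  add_mem' := by
    intro f g hf hg p hp
    simp [Pi.add_apply, hf p hp, hg p hp]
  zero_mem' := by intro p _; rfl
  smul_mem' := by
    intro c f hf p hp
    simp [Pi.smul_apply, hf p hp]

def statement16belowZero (K : Type) [Field K] {N : Type} [AddCommGroup N] [Module K N]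
    (p : ℤ) : Submodule K (ℤ → N) where
  carrier := {f | ∀ q, q < p → f q = 0}
  add_mem' := by intro f g hf hg q hq; simp [hf q hq, hg q hq]
  zero_mem' := by intro q _; rfl
  smul_mem' := by intro c f hf q hq; simp [hf q hq]

def statement16snoc (K : Type) [Field K] (M : Type) [AddCommGroup M] [Module K M]
    (m : ℕ) : ((Fin m → M) × M) ≃ₗ[K] (Fin (m + 1) → M) where
  toFun x := Fin.snoc x.1 x.2
  invFun f := (fun q => f q.castSucc, f (Fin.last m))
  map_add' x y := by
    funext q
    refine Fin.lastCases ?_ (fun q => ?_) q <;> simp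
  map_smul' c x := by
    funext q
    refine Fin.lastCases ?_ (fun q => ?_) q <;> simp
  left_inv x := by
    refine Prod.ext ?_ ?_
    · funext q; simp
    · simp
  right_inv f := by
    funext q
    refine Fin.lastCases ?_ (fun q => ?_) q <;> simp

set_option maxHeartbeats 2000000 in
/-- Lemma 3.10 (lemma:cohom of qD): let `E` be a complex vector bundle with a
projectively hyper-holomorphic connection on an irreducible holomorphic
symplectic manifold.  Writing `A k = A^{0,k}(End E)` (zero in negative
degrees), `D0 = [∇^{0,1},-]` and `D1 = [∇_J^{0,1},-]` — two anticommuting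
differentials satisfying the strong `D0 D1`-lemma — the `k`-th cohomology of
the quaternionic Dolbeault complex, i.e. of the total complex `DQ = x D1 + y D0`
of the first-quadrant double complex `x^p y^q A^{0,p+q}(End E)`, is isomorphic
to `H^k_{D0}(A^{0,*}(End E)) ⊗ ℂ[x,y]_k`, namely to `k + 1` copies of
`H^k_{D0}(A^{0,*}(End E))`.  (Degrees `k ≥ 0` are written as `k = j + 1`.) -/
theorem statement16 (K : Type) [Field K] [CharZero K]
    (A : ℤ → Type) [∀ i, AddCommGroup (A i)] [∀ i, Module K (A i)]
    (htriv : ∀ i : ℤ, i < 0 → Subsingleton (A i))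
    (D0 D1 : ∀ i : ℤ, A i →ₗ[K] A (i + 1))
    (h00 : ∀ i : ℤ, D0 (i + 1) ∘ₗ D0 i = 0)
    (h11 : ∀ i : ℤ, D1 (i + 1) ∘ₗ D1 i = 0)
    (h01 : ∀ i : ℤ, D0 (i + 1) ∘ₗ D1 i + D1 (i + 1) ∘ₗ D0 i = 0)
    (hstrong : ∀ i : ℤ,
      LinearMap.ker (D0 (i + 1 + 1)) ⊓ LinearMap.ker (D1 (i + 1 + 1)) ⊓
          (LinearMap.range (D0 (i + 1)) ⊔ LinearMap.range (D1 (i + 1)))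
        = LinearMap.range (D0 (i + 1) ∘ₗ D1 i))
    -- the total differential `DQ = x D1 + y D0` of the double complex
    (DQ : ∀ i : ℤ, (ℤ → A i) →ₗ[K] (ℤ → A (i + 1)))
    (hDQ : ∀ (i : ℤ) (f : ℤ → A i) (p : ℤ), DQ i f p = D1 i (f (p - 1)) + D0 i (f p)) :
    ∀ j : ℤ, 0 ≤ j + 1 →
      Nonempty
        ((↥(LinearMap.ker (DQ (j + 1)) ⊓ quatPiece (K := K) (j + 1)) ⧸
            Submodule.comap
              (LinearMap.ker (DQ (j + 1)) ⊓ quatPiece (K := K) (j + 1)).subtype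
              (Submodule.map (DQ j) (quatPiece (K := K) j)))
          ≃ₗ[K]
         (Fin ((j + 1).toNat + 1) →
            ↥(LinearMap.ker (D0 (j + 1))) ⧸
              Submodule.comap (LinearMap.ker (D0 (j + 1))).subtype
                (LinearMap.range (D0 j)))) := by
  intro j hj
  obtain ⟨i, rfl⟩ : ∃ i : ℤ, j = i + 1 := ⟨j - 1, by ring⟩
  have H00 : ∀ (m : ℤ) (a : A m), D0 (m+1) (D0 m a) = 0 := by
    intro m a; simpa using LinearMap.congr_fun (h00 m) a
  have H11 : ∀ (m : ℤ) (a : A m), D1 (m+1) (D1 m a) = 0 := by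
    intro m a; simpa using LinearMap.congr_fun (h11 m) a
  have H01 : ∀ (m : ℤ) (a : A m), D0 (m+1) (D1 m a) + D1 (m+1) (D0 m a) = 0 := by
    intro m a; simpa using LinearMap.congr_fun (h01 m) a
  have Hddc : ∀ (m : ℤ) (x : A (m+1+1)), D0 (m+1+1) x = 0 → D1 (m+1+1) x = 0 →
      x ∈ (LinearMap.range (D0 (m+1)) ⊔ LinearMap.range (D1 (m+1))) →
      ∃ c : A m, x = D0 (m+1) (D1 m c) := by
    intro m x h0 h1 hr
    have hx : x ∈ LinearMap.ker (D0 (m+1+1)) ⊓ LinearMap.ker (D1 (m+1+1)) ⊓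
        (LinearMap.range (D0 (m+1)) ⊔ LinearMap.range (D1 (m+1))) :=
      Submodule.mem_inf.mpr ⟨Submodule.mem_inf.mpr ⟨LinearMap.mem_ker.mpr h0,
        LinearMap.mem_ker.mpr h1⟩, hr⟩
    rw [hstrong m] at hx
    obtain ⟨c, hc⟩ := hx
    exact ⟨c, by simpa using hc.symm⟩
  have Hstep : ∀ a : A (i+1+1), D0 (i+1+1) a = 0 →
      ∃ c : A (i+1), D1 (i+1+1) a = D0 (i+1+1) (D1 (i+1) c) := by
    intro a h0
    refine Hddc (i+1) (D1 (i+1+1) a) ?_ (H11 _ _)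
      (Submodule.mem_sup_right (LinearMap.mem_range_self _ _))
    have h := H01 (i+1+1) a
    rw [h0, map_zero, add_zero] at h
    exact h
  have HstepA : ∀ a w : A (i+1), D0 (i+1) a = - D1 (i+1) w →
      ∃ c : A i, D1 (i+1) a = D0 (i+1) (D1 i c) := by
    intro a w hw
    refine Hddc i (D1 (i+1) a) ?_ (H11 _ _)
      (Submodule.mem_sup_right (LinearMap.mem_range_self _ _))
    have h := H01 (i+1) a
    rw [hw, map_neg, H11 (i+1) w, neg_zero, add_zero] at h
    exact h
  have HDQ2 : ∀ (g : ℤ → A (i+1)), DQ (i+1+1) (DQ (i+1) g) = 0 := by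
    intro g
    funext q
    rw [hDQ (i+1+1) _ q, hDQ (i+1) g (q-1), hDQ (i+1) g q, map_add, map_add,
      H11 (i+1) (g (q-1-1)), H00 (i+1) (g q), zero_add, add_zero]
    simp only [Pi.zero_apply]
    exact (add_comm _ _).trans (H01 (i+1) (g (q-1)))
  -- abbreviations
  let Z : Submodule K (ℤ → A (i+1+1)) :=
    LinearMap.ker (DQ (i+1+1)) ⊓ quatPiece (K := K) (i+1+1)
  let B : Submodule K (ℤ → A (i+1+1)) :=
    Submodule.map (DQ (i+1)) (quatPiece (K := K) (i+1))
  let W : ℤ → Submodule K (ℤ → A (i+1+1)) := fun p => Z ⊓ statement16belowZero K p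
  have memW : ∀ (p : ℤ) (f : ℤ → A (i+1+1)),
      (DQ (i+1+1) f = 0) → (∀ q : ℤ, q < 0 ∨ i+1+1 < q → f q = 0) →
      (∀ q : ℤ, q < p → f q = 0) → f ∈ W p := by
    intro p f h1 h2 h3
    exact Submodule.mem_inf.mpr ⟨Submodule.mem_inf.mpr ⟨LinearMap.mem_ker.mpr h1, h2⟩, h3⟩
  have Wker : ∀ (p : ℤ) (f : ℤ → A (i+1+1)), f ∈ W p → DQ (i+1+1) f = 0 := by
    intro p f hf
    exact LinearMap.mem_ker.mp (Submodule.mem_inf.mp (Submodule.mem_inf.mp hf).1).1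
  have Wquat : ∀ (p : ℤ) (f : ℤ → A (i+1+1)), f ∈ W p →
      ∀ q : ℤ, q < 0 ∨ i+1+1 < q → f q = 0 := by
    intro p f hf
    exact (Submodule.mem_inf.mp (Submodule.mem_inf.mp hf).1).2
  have Wlow : ∀ (p : ℤ) (f : ℤ → A (i+1+1)), f ∈ W p → ∀ q : ℤ, q < p → f q = 0 := by
    intro p f hf
    exact (Submodule.mem_inf.mp hf).2
  have Bquat : ∀ g : ℤ → A (i+1), (∀ q : ℤ, q < 0 ∨ i+1 < q → g q = 0) →
      ∀ q : ℤ, q < 0 ∨ i+1+1 < q → DQ (i+1) g q = 0 := by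
    intro g hg q hq
    rw [hDQ]
    rcases hq with hq | hq
    · rw [hg (q-1) (Or.inl (by omega)), hg q (Or.inl hq)]; simp
    · rw [hg (q-1) (Or.inr (by omega)), hg q (Or.inr (by omega))]; simp
  let HT := (↥(LinearMap.ker (D0 (i+1+1))) ⧸
      Submodule.comap (LinearMap.ker (D0 (i+1+1))).subtype (LinearMap.range (D0 (i+1))))
  have key : ∀ (m : ℕ) (p : ℤ), 0 ≤ p → p + m = i+1+1+1 →
      Nonempty ((↥(W p) ⧸ Submodule.comap (W p).subtype B) ≃ₗ[K] (Fin m → HT)) := by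
    intro m
    induction m with
    | zero =>
      intro p hp0 hpm
      have hWbot : ∀ f ∈ W p, f = (0 : ℤ → A (i+1+1)) := by
        intro f hf
        funext q
        by_cases hq : q < p
        · exact Wlow p f hf q hq
        · exact Wquat p f hf q (Or.inr (by omega))
      have hsub1 : Subsingleton (↥(W p) ⧸ Submodule.comap (W p).subtype B) := by
        constructor
        intro x y
        obtain ⟨a, rfl⟩ := Submodule.Quotient.mk_surjective _ x
        obtain ⟨b, rfl⟩ := Submodule.Quotient.mk_surjective _ y
        congr 1
        exact Subtype.ext (by rw [hWbot a a.2, hWbot b b.2])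
      have hsub2 : Subsingleton (Fin 0 → HT) := ⟨fun f g => funext fun x => x.elim0⟩
      exact ⟨LinearEquiv.ofSubsingleton _ _⟩
    | succ m ih =>
      intro p hp0 hpm
      have hpn : p ≤ i + 1 + 1 := by omega
      have hker0 : ∀ f : ↥(W p), D0 (i+1+1) ((f : ℤ → A (i+1+1)) p) = 0 := by
        intro f
        have h := congrFun (Wker p f.1 f.2) p
        rw [hDQ (i+1+1) f.1 p, Wlow p f.1 f.2 (p-1) (by omega), map_zero, zero_add] at h
        simpa using h
      let φ : ↥(W p) →ₗ[K] HT :=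
        (Submodule.mkQ _).comp (LinearMap.codRestrict (LinearMap.ker (D0 (i+1+1)))
          ((LinearMap.proj p).comp (W p).subtype)
          (fun f => LinearMap.mem_ker.mpr (hker0 f)))
      have hφapp : ∀ f : ↥(W p), φ f = Submodule.Quotient.mk
          ⟨(f : ℤ → A (i+1+1)) p, LinearMap.mem_ker.mpr (hker0 f)⟩ := fun f => rfl
      have hA : Submodule.comap (W p).subtype B ≤ LinearMap.ker φ := by
        intro f hf
        obtain ⟨g, hg, hgf0⟩ := Submodule.mem_map.mp hf
        have hgf : DQ (i+1) g = (f : ℤ → A (i+1+1)) := hgf0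
        have hgq : ∀ q : ℤ, q < 0 ∨ i+1 < q → g q = 0 := hg
        rw [LinearMap.mem_ker, hφapp, Submodule.Quotient.mk_eq_zero]
        show (f : ℤ → A (i+1+1)) p ∈ LinearMap.range (D0 (i+1))
        have hfp : (f : ℤ → A (i+1+1)) p = D1 (i+1) (g (p-1)) + D0 (i+1) (g p) := by
          rw [← hgf]; exact hDQ (i+1) g p
        rw [hfp]
        refine Submodule.add_mem _ ?_ (LinearMap.mem_range_self _ _)
        by_cases hp1 : p - 1 < 0
        · rw [hgq (p-1) (Or.inl hp1), map_zero]; exact Submodule.zero_mem _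
        by_cases hp2 : i + 1 < p - 1
        · rw [hgq (p-1) (Or.inr hp2), map_zero]; exact Submodule.zero_mem _
        have hdq0 : D1 (i+1) (g (p-1-1)) + D0 (i+1) (g (p-1)) = 0 := by
          rw [← hDQ (i+1) g (p-1), hgf]
          exact Wlow p f.1 f.2 (p-1) (by omega)
        obtain ⟨c, hc⟩ := HstepA (g (p-1)) (g (p-1-1))
          (eq_neg_of_add_eq_zero_right hdq0)
        rw [hc]
        exact LinearMap.mem_range_self _ _
      let φbar := Submodule.liftQ _ φ hA
      have hφbar : ∀ f : ↥(W p), φbar (Submodule.Quotient.mk f) = φ f := fun f => rfl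
      have hsurj : Function.Surjective φbar := by
        intro y
        obtain ⟨⟨a, haker⟩, rfl⟩ := Submodule.Quotient.mk_surjective _ y
        have ha0 : D0 (i+1+1) a = 0 := LinearMap.mem_ker.mp haker
        obtain ⟨c, hc⟩ := Hstep a ha0
        by_cases hpe : p = i + 1 + 1
        · -- top column: correct `a` to be `D1`-closed
          have ha'0 : D0 (i+1+1) (a + D0 (i+1) c) = 0 := by
            rw [map_add, ha0, H00 (i+1) c, zero_add]
          have ha'1 : D1 (i+1+1) (a + D0 (i+1) c) = 0 := by
            rw [map_add, hc]
            exact H01 (i+1) c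
          have hfW : (fun q => if q = p then a + D0 (i+1) c else 0) ∈ W p := by
            refine memW p _ ?_ ?_ ?_
            · funext q
              rw [hDQ (i+1+1) _ q]
              rcases eq_or_ne q p with h1 | h1
              · rw [if_neg (show ¬(q - 1 = p) by omega), if_pos h1]; simp [ha'0]
              · rcases eq_or_ne q (p+1) with h2 | h2
                · rw [if_pos (show q - 1 = p by omega), if_neg h1]; simp [ha'1]
                · rw [if_neg (show ¬(q - 1 = p) by omega), if_neg h1]; simp
            · intro q hq
              show (if q = p then a + D0 (i+1) c else 0) = 0
              rcases hq with h | h <;> rw [if_neg (show ¬(q = p) by omega)]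
            · intro q hq
              show (if q = p then a + D0 (i+1) c else 0) = 0
              rw [if_neg (show ¬(q = p) by omega)]
          refine ⟨Submodule.Quotient.mk ⟨_, hfW⟩, ?_⟩
          rw [hφbar, hφapp]
          refine (Submodule.Quotient.eq _).mpr ?_
          refine Submodule.mem_comap.mpr ?_
          show (if p = p then a + D0 (i+1) c else 0) - a ∈ LinearMap.range (D0 (i+1))
          rw [if_pos rfl]
          exact ⟨c, by abel⟩
        · -- lower columns
          have hfW : (fun q => if q = p then a else if q = p+1 then -(D1 (i+1) c) else 0)
              ∈ W p := by
            refine memW p _ ?_ ?_ ?_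
            · funext q
              rw [hDQ (i+1+1) _ q]
              rcases eq_or_ne q p with h1 | h1
              · rw [if_neg (show ¬(q - 1 = p) by omega),
                  if_neg (show ¬(q - 1 = p + 1) by omega), if_pos h1]
                simp [ha0]
              · rcases eq_or_ne q (p+1) with h2 | h2
                · rw [if_pos (show q - 1 = p by omega), if_neg h1, if_pos h2, map_neg, hc]
                  simp
                · rcases eq_or_ne q (p+2) with h3 | h3
                  · rw [if_neg (show ¬(q - 1 = p) by omega),
                      if_pos (show q - 1 = p + 1 by omega), if_neg h1, if_neg h2,
                      map_neg, H11 (i+1) c]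
                    simp
                  · rw [if_neg (show ¬(q - 1 = p) by omega),
                      if_neg (show ¬(q - 1 = p + 1) by omega), if_neg h1, if_neg h2]
                    simp
            · intro q hq
              show (if q = p then a else if q = p+1 then -(D1 (i+1) c) else 0) = 0
              rcases hq with h | h <;>
                rw [if_neg (show ¬(q = p) by omega), if_neg (show ¬(q = p+1) by omega)]
            · intro q hq
              show (if q = p then a else if q = p+1 then -(D1 (i+1) c) else 0) = 0
              rw [if_neg (show ¬(q = p) by omega), if_neg (show ¬(q = p+1) by omega)]
          refine ⟨Submodule.Quotient.mk ⟨_, hfW⟩, ?_⟩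
          rw [hφbar, hφapp]
          congr 1
          refine Subtype.ext ?_
          show (if p = p then a else if p = p+1 then -(D1 (i+1) c) else 0) = a
          rw [if_pos rfl]
      -- the inclusion of the next filtration step
      have hWle : W (p+1) ≤ W p := by
        intro f hf
        exact memW p f (Wker _ f hf) (Wquat _ f hf) (fun q hq => Wlow _ f hf q (by omega))
      let ι : (↥(W (p+1)) ⧸ Submodule.comap (W (p+1)).subtype B) →ₗ[K]
              (↥(W p) ⧸ Submodule.comap (W p).subtype B) :=
        Submodule.mapQ _ _ (Submodule.inclusion hWle) (fun x hx => hx)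
      have hιmk : ∀ x : ↥(W (p+1)), ι (Submodule.Quotient.mk x) =
          Submodule.Quotient.mk (Submodule.inclusion hWle x) := fun x => rfl
      have hinj : Function.Injective ι := by
        rw [← LinearMap.ker_eq_bot, eq_bot_iff]
        intro x hx
        obtain ⟨w, rfl⟩ := Submodule.Quotient.mk_surjective _ x
        rw [LinearMap.mem_ker, hιmk, Submodule.Quotient.mk_eq_zero] at hx
        rw [Submodule.mem_bot, Submodule.Quotient.mk_eq_zero]
        exact hx
      have hrange : LinearMap.range ι = LinearMap.ker φbar := by
        apply le_antisymm
        · rintro x ⟨z, rfl⟩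
          obtain ⟨w, rfl⟩ := Submodule.Quotient.mk_surjective _ z
          rw [LinearMap.mem_ker, hιmk, hφbar, hφapp, Submodule.Quotient.mk_eq_zero]
          refine Submodule.mem_comap.mpr ?_
          show ((Submodule.inclusion hWle w : ↥(W p)) : ℤ → A (i+1+1)) p
            ∈ LinearMap.range (D0 (i+1))
          have h0 : ((Submodule.inclusion hWle w : ↥(W p)) : ℤ → A (i+1+1)) p = 0 :=
            Wlow (p+1) w.1 w.2 p (by omega)
          rw [h0]
          exact Submodule.zero_mem _
        · intro x hx
          obtain ⟨f, rfl⟩ := Submodule.Quotient.mk_surjective _ x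
          rw [LinearMap.mem_ker, hφbar, hφapp, Submodule.Quotient.mk_eq_zero] at hx
          have hfp : (f : ℤ → A (i+1+1)) p ∈ LinearMap.range (D0 (i+1)) := hx
          obtain ⟨b, hb⟩ := hfp
          by_cases hpe : p = i + 1 + 1
          · by_cases hneg : i + 1 < 0
            · -- degree 0 : everything is trivial
              have hb0 : b = 0 := @Subsingleton.elim _ (htriv (i+1) hneg) b 0
              have hfp0 : (f : ℤ → A (i+1+1)) p = 0 := by rw [← hb, hb0, map_zero]
              have hf0 : (f : ℤ → A (i+1+1)) = 0 := by
                funext q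
                rcases lt_trichotomy q p with h | h | h
                · exact Wlow p f.1 f.2 q h
                · rw [h]; exact hfp0
                · exact Wquat p f.1 f.2 q (Or.inr (by omega))
              have hfz : f = (0 : ↥(W p)) := Subtype.ext hf0
              rw [hfz, Submodule.Quotient.mk_zero]
              exact Submodule.zero_mem _
            · push_neg at hneg
              have hD1fp : D1 (i+1+1) ((f : ℤ → A (i+1+1)) p) = 0 := by
                have h := congrFun (Wker p f.1 f.2) (p+1)
                rw [hDQ (i+1+1) f.1 (p+1), show p + 1 - 1 = p by omega,
                  Wquat p f.1 f.2 (p+1) (Or.inr (by omega)), map_zero, add_zero] at h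
                simpa using h
              obtain ⟨u, hu⟩ := Hddc i ((f : ℤ → A (i+1+1)) p) (hker0 f) hD1fp
                (Submodule.mem_sup_left ⟨b, hb⟩)
              have hfB : (f : ℤ → A (i+1+1)) ∈ B := by
                refine ⟨fun q => if q = i+1 then -(D0 i u) else 0, ?_, ?_⟩
                · intro q hq
                  show (if q = i+1 then -(D0 i u) else 0) = 0
                  rcases hq with h | h <;> rw [if_neg (show ¬(q = i+1) by omega)]
                · funext q
                  rw [hDQ (i+1) _ q]
                  rcases eq_or_ne q (i+1) with h1 | h1
                  · rw [if_neg (show ¬(q - 1 = i+1) by omega), if_pos h1, map_zero,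
                      zero_add, map_neg, H00 i u, neg_zero]
                    exact (Wlow p f.1 f.2 q (by omega)).symm
                  · rcases eq_or_ne q (i+1+1) with h2 | h2
                    · rw [if_pos (show q - 1 = i+1 by omega), if_neg h1, map_zero,
                        add_zero, map_neg, neg_eq_of_add_eq_zero_left (H01 i u), ← hu]
                      rw [show q = p by omega]
                    · rw [if_neg (show ¬(q - 1 = i+1) by omega), if_neg h1, map_zero,
                        map_zero, add_zero]
                      refine (?_ : (f : ℤ → A (i+1+1)) q = 0).symm
                      rcases lt_or_ge q p with h | h
                      · exact Wlow p f.1 f.2 q h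
                      · exact Wquat p f.1 f.2 q (Or.inr (by omega))
              have hmk0 : (Submodule.Quotient.mk f :
                  ↥(W p) ⧸ Submodule.comap (W p).subtype B) = 0 :=
                (Submodule.Quotient.mk_eq_zero _).mpr hfB
              rw [hmk0]
              exact Submodule.zero_mem _
          · -- lower columns : peel off a coboundary
            have hgq : ∀ q : ℤ, q < 0 ∨ i+1 < q →
                (fun q => if q = p then b else 0 : ℤ → A (i+1)) q = 0 := by
              intro q hq; rcases hq with h | h <;> exact if_neg (by omega)
            have hgmem : (fun q => if q = p then b else 0 : ℤ → A (i+1))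
                ∈ quatPiece (K := K) (i+1) := hgq
            have hf' : ((f : ℤ → A (i+1+1)) -
                DQ (i+1) (fun q => if q = p then b else 0)) ∈ W (p+1) := by
              refine memW (p+1) _ ?_ ?_ ?_
              · rw [map_sub, Wker p f.1 f.2, HDQ2, sub_zero]
              · intro q hq
                rw [Pi.sub_apply, Wquat p f.1 f.2 q hq, Bquat _ hgq q hq, sub_zero]
              · intro q hq
                rw [Pi.sub_apply, hDQ (i+1) _ q]
                rcases eq_or_ne q p with h1 | h1
                · rw [if_neg (show ¬(q - 1 = p) by omega), if_pos h1, map_zero, zero_add,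
                    h1, hb, sub_self]
                · rw [if_neg (show ¬(q - 1 = p) by omega), if_neg h1, map_zero, map_zero,
                    add_zero, Wlow p f.1 f.2 q (by omega), sub_zero]
            refine ⟨Submodule.Quotient.mk ⟨_, hf'⟩, ?_⟩
            rw [hιmk]
            refine (Submodule.Quotient.eq _).mpr ?_
            show ((f : ℤ → A (i+1+1)) - DQ (i+1) (fun q => if q = p then b else 0))
              - (f : ℤ → A (i+1+1)) ∈ B
            have he : ((f : ℤ → A (i+1+1)) - DQ (i+1) (fun q => if q = p then b else 0))
                - (f : ℤ → A (i+1+1)) = -(DQ (i+1) (fun q => if q = p then b else 0)) := by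
              abel
            rw [he]
            exact Submodule.neg_mem _ ⟨_, hgmem, rfl⟩
      obtain ⟨e_ih⟩ := ih (p+1) (by omega) (by push_cast at hpm ⊢; omega)
      obtain ⟨qc, hqc⟩ := Submodule.exists_isCompl (LinearMap.ker φbar)
      have e1 : (↥(W (p+1)) ⧸ Submodule.comap (W (p+1)).subtype B) ≃ₗ[K]
          ↥(LinearMap.ker φbar) :=
        (LinearEquiv.ofInjective ι hinj).trans (LinearEquiv.ofEq _ _ hrange)
      have e2 : ↥qc ≃ₗ[K] HT :=
        (Submodule.quotientEquivOfIsCompl _ _ hqc).symm.trans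
          (φbar.quotKerEquivOfSurjective hsurj)
      exact ⟨((Submodule.prodEquivOfIsCompl _ _ hqc).symm.trans
        ((e1.symm.trans e_ih).prodCongr e2)).trans (statement16snoc K HT m)⟩
  have hW0 : W 0 = Z := by
    refine inf_eq_left.mpr ?_
    intro f hf q hq
    exact (Submodule.mem_inf.mp hf).2 q (Or.inl hq)
  obtain ⟨e⟩ := key ((i+1+1).toNat + 1) 0 le_rfl (by push_cast; omega)
  rw [hW0] at e
  exact ⟨e⟩
end
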